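/- Let d ≥ 1, a > 0 and x, y ∈ ℝ^d. Then ∫_{ℝ^d} CS⁺(t,x) CS⁺(t,y) exp(−a‖t‖²) dt = (π/a)^{d/2} exp(−‖x−y‖²/(4a)). -/

import Mathlib

/-!
The product-to-sum formulas give `CS⁺(t,x) CS⁺(t,y) = cos ⟪x - y, t⟫ + sin ⟪x + y, t⟫`.
Both terms, weighted by the Gaussian, are the real and imaginary parts of
`exp (-a‖t‖² + i⟪w, t⟫)`, whose integral is the real number `(π/a)^{d/2} exp (-‖w‖²/(4a))`
(the Fourier transform of a Gaussian). So the cosine term contributes this value at `w = x - y`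
and the sine term contributes nothing.
-/

open MeasureTheory Real

/-- `CS⁺(t,x) = cos(tᵀx) + sin(tᵀx)`. -/
noncomputable def CSplus {d : ℕ} (t x : EuclideanSpace ℝ (Fin d)) : ℝ :=
  Real.cos (inner ℝ t x : ℝ) + Real.sin (inner ℝ t x : ℝ)

open scoped RealInnerProductSpace

theorem CSplus_mul_CSplus {d : ℕ} (t x y : EuclideanSpace ℝ (Fin d)) :
    CSplus t x * CSplus t y = cos ⟪x - y, t⟫ + sin ⟪x + y, t⟫ := by
  simp only [CSplus, real_inner_comm t, inner_sub_right, inner_add_right]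
  rw [cos_sub, sin_add]
  ring

section GaussianCharacter

variable {V : Type*} [NormedAddCommGroup V] [InnerProductSpace ℝ V]

theorem re_cexp_neg_mul_sq_norm_add_I_mul_inner (a : ℝ) (w t : V) :
    (Complex.exp (-a * ‖t‖ ^ 2 + Complex.I * ⟪w, t⟫)).re = cos ⟪w, t⟫ * exp (-a * ‖t‖ ^ 2) := by
  simp [Complex.exp_re, ← Complex.ofReal_pow, mul_comm]

theorem im_cexp_neg_mul_sq_norm_add_I_mul_inner (a : ℝ) (w t : V) :
    (Complex.exp (-a * ‖t‖ ^ 2 + Complex.I * ⟪w, t⟫)).im = sin ⟪w, t⟫ * exp (-a * ‖t‖ ^ 2) := by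
  simp [Complex.exp_im, ← Complex.ofReal_pow, mul_comm]

variable [FiniteDimensional ℝ V] [MeasurableSpace V] [BorelSpace V] {a : ℝ}

theorem integrable_cexp_neg_mul_sq_norm_add_I_mul_inner (ha : 0 < a) (w : V) :
    Integrable fun t : V ↦ Complex.exp (-a * ‖t‖ ^ 2 + Complex.I * ⟪w, t⟫) :=
  GaussianFourier.integrable_cexp_neg_mul_sq_norm_add (by simpa using ha) Complex.I w

theorem integral_cexp_neg_mul_sq_norm_add_I_mul_inner (ha : 0 < a) (w : V) :
    ∫ t : V, Complex.exp (-a * ‖t‖ ^ 2 + Complex.I * ⟪w, t⟫)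
      = ((π / a) ^ ((Module.finrank ℝ V : ℝ) / 2) * exp (-‖w‖ ^ 2 / (4 * a)) : ℝ) := by
  rw [GaussianFourier.integral_cexp_neg_mul_sq_norm_add (by simpa using ha), Complex.I_sq]
  push_cast [Complex.ofReal_cpow (by positivity : (0 : ℝ) ≤ π / a), Complex.ofReal_exp]
  ring_nf

theorem integrable_cos_inner_mul_gaussian (ha : 0 < a) (w : V) :
    Integrable fun t : V ↦ cos ⟪w, t⟫ * exp (-a * ‖t‖ ^ 2) := by
  simpa only [RCLike.re_to_complex, re_cexp_neg_mul_sq_norm_add_I_mul_inner] using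
    (integrable_cexp_neg_mul_sq_norm_add_I_mul_inner ha w).re

theorem integrable_sin_inner_mul_gaussian (ha : 0 < a) (w : V) :
    Integrable fun t : V ↦ sin ⟪w, t⟫ * exp (-a * ‖t‖ ^ 2) := by
  simpa only [RCLike.im_to_complex, im_cexp_neg_mul_sq_norm_add_I_mul_inner] using
    (integrable_cexp_neg_mul_sq_norm_add_I_mul_inner ha w).im

theorem integral_cos_inner_mul_gaussian (ha : 0 < a) (w : V) :
    ∫ t : V, cos ⟪w, t⟫ * exp (-a * ‖t‖ ^ 2)
      = (π / a) ^ ((Module.finrank ℝ V : ℝ) / 2) * exp (-‖w‖ ^ 2 / (4 * a)) := by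
  simp_rw [← re_cexp_neg_mul_sq_norm_add_I_mul_inner, ← RCLike.re_to_complex,
    integral_re (integrable_cexp_neg_mul_sq_norm_add_I_mul_inner ha w), RCLike.re_to_complex,
    integral_cexp_neg_mul_sq_norm_add_I_mul_inner ha w, Complex.ofReal_re]

theorem integral_sin_inner_mul_gaussian (ha : 0 < a) (w : V) :
    ∫ t : V, sin ⟪w, t⟫ * exp (-a * ‖t‖ ^ 2) = 0 := by
  simp_rw [← im_cexp_neg_mul_sq_norm_add_I_mul_inner, ← RCLike.im_to_complex,
    integral_im (integrable_cexp_neg_mul_sq_norm_add_I_mul_inner ha w), RCLike.im_to_complex,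
    integral_cexp_neg_mul_sq_norm_add_I_mul_inner ha w, Complex.ofReal_im]

end GaussianCharacter

theorem integral_CSplus_mul_CSplus_gaussian_general (d : ℕ) (a : ℝ) (ha : 0 < a)
    (x y : EuclideanSpace ℝ (Fin d)) :
    ∫ t : EuclideanSpace ℝ (Fin d), CSplus t x * CSplus t y * Real.exp (-a * ‖t‖ ^ 2)
      = (π / a) ^ ((d : ℝ) / 2) * Real.exp (-‖x - y‖ ^ 2 / (4 * a)) := by
  simp_rw [CSplus_mul_CSplus, add_mul]
  rw [integral_add (integrable_cos_inner_mul_gaussian ha _) (integrable_sin_inner_mul_gaussian ha _),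
    integral_cos_inner_mul_gaussian ha, integral_sin_inner_mul_gaussian ha, add_zero,
    finrank_euclideanSpace_fin]

/-- `∫_{ℝ^d} CS⁺(t,x) CS⁺(t,y) e^{-a‖t‖²} dt = (π/a)^{d/2} e^{-‖x-y‖²/(4a)}`. -/
theorem integral_CSplus_mul_CSplus_gaussian (d : ℕ) (hd : 1 ≤ d) (a : ℝ) (ha : 0 < a)
    (x y : EuclideanSpace ℝ (Fin d)) :
    ∫ t : EuclideanSpace ℝ (Fin d), CSplus t x * CSplus t y * Real.exp (-a * ‖t‖ ^ 2)
      = (π / a) ^ ((d : ℝ) / 2) * Real.exp (-‖x - y‖ ^ 2 / (4 * a)) :=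
  integral_CSplus_mul_CSplus_gaussian_general d a ha x y
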